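/- arXiv:1708.00761 — 7 statements merged into one kernel-verified Lean document; each statement's English description precedes it below -/
import Mathlib

section
/- Let p_1 < p_2 < ... < p_m be real numbers with positive real weights r_1, ..., r_m, and define t_k = Σ_{l=1}^m r_l p_l^k. Then for every k with 1 ≤ k ≤ m, the determinant of the k×k Hankel matrix H_k = [t_{i+j-2}]_{i,j=1..k} equals Σ_{1 ≤ i_1 < ... < i_k ≤ m} r_{i_1}···r_{i_k} ∏_{1 ≤ j < l ≤ k} (p_{i_j} - p_{i_l})^2, and in particular det H_k > 0. -/
/-!
Write `H_k = A B` with `A = (r_l p_l^i)_{i,l}` and `B = (p_l^j)_{l,j}`. By Cauchy–Binet, `det H_k` is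
the sum over `k`-subsets `s` of the products of the two `k × k` minors on `s`; the minor of `B` is
the Vandermonde matrix of `(p_l)_{l ∈ s}` and that of `A` is its transpose with the columns scaled by
`r_l`, so each summand is `(∏_{l ∈ s} r_l)` times a squared Vandermonde determinant. When the `p_l`
are distinct and the `r_l` positive, every summand is positive.
-/

open Finset Matrix

section OrderEmbOfFin

variable {κ : Type*} [LinearOrder κ] {M : Type*} [CommMonoid M]

theorem Finset.prod_orderEmbOfFin (s : Finset κ) {k : ℕ} (h : s.card = k) (f : κ → M) :
    ∏ i, f (s.orderEmbOfFin h i) = ∏ x ∈ s, f x := by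
  conv_rhs => rw [← s.map_orderEmbOfFin_univ h, prod_map]
  rfl

theorem Finset.prod_prod_ite_lt_eq_prod_prod_Ioi (s : Finset κ) {k : ℕ} (h : s.card = k)
    (g : κ → κ → M) :
    ∏ x ∈ s, ∏ y ∈ s, (if x < y then g x y else 1) =
      ∏ i, ∏ j ∈ Ioi i, g (s.orderEmbOfFin h i) (s.orderEmbOfFin h j) := by
  simp only [← s.prod_orderEmbOfFin h, OrderEmbedding.lt_iff_lt, prod_ite, prod_const_one,
    mul_one, filter_lt_eq_Ioi]

theorem Finset.exists_perm_orderEmbOfFin_comp_eq {k : ℕ} {f : Fin k → κ}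
    (hf : Function.Injective f) (h : (univ.image f).card = k) :
    ∃ σ : Equiv.Perm (Fin k), (univ.image f).orderEmbOfFin h ∘ σ = f := by
  have hrange : Set.range f = Set.range ((univ.image f).orderEmbOfFin h) := by
    simp [range_orderEmbOfFin]
  have he := ((univ.image f).orderEmbOfFin h).injective
  exact ⟨(Equiv.ofInjective f hf).trans
      ((Equiv.setCongr hrange).trans (Equiv.ofInjective _ he).symm),
    funext fun _ => Equiv.apply_ofInjective_symm he _⟩

end OrderEmbOfFin

namespace Matrix

variable {R : Type*} [CommRing R] {n κ : Type*} [Fintype n] [DecidableEq n]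

theorem det_mul_eq_sum_det_submatrix_mul_prod [Fintype κ] (A : Matrix n κ R)
    (B : Matrix κ n R) :
    (A * B).det = ∑ f : n → κ, (A.submatrix id f).det * ∏ i, B (f i) i := by
  simp only [det_apply', mul_apply, prod_univ_sum, Fintype.piFinset_univ, mul_sum, sum_mul,
    submatrix_apply, id, prod_mul_distrib]
  rw [sum_comm]
  exact sum_congr rfl fun f _ => sum_congr rfl fun σ _ => (mul_assoc _ _ _).symm

theorem det_submatrix_eq_zero_of_not_injective (A : Matrix n κ R) {f : n → κ}
    (hf : ¬ Function.Injective f) : (A.submatrix id f).det = 0 := by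
  obtain ⟨i, j, hij, hne⟩ : ∃ i j, f i = f j ∧ i ≠ j := by
    simpa [Function.Injective] using hf
  exact det_zero_of_column_eq hne fun l => by simp [hij]

theorem det_mul_eq_sum_det_submatrix_mul_det_submatrix [Fintype κ] [LinearOrder κ] {k : ℕ}
    (A : Matrix (Fin k) κ R) (B : Matrix κ (Fin k) R) :
    (A * B).det = ∑ s : {s : Finset κ // s.card = k},
      (A.submatrix id (s.1.orderEmbOfFin s.2)).det *
        (B.submatrix (s.1.orderEmbOfFin s.2) id).det := by
  let e (s : {s : Finset κ // s.card = k}) : Fin k → κ := s.1.orderEmbOfFin s.2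
  have hsign : ∀ s (σ : Equiv.Perm (Fin k)),
      (A.submatrix id (e s ∘ σ)).det * ∏ i, B (e s (σ i)) i =
        (A.submatrix id (e s)).det * (Equiv.Perm.sign σ * ∏ i, B (e s (σ i)) i) := by
    intro s σ
    rw [show A.submatrix id (e s ∘ σ) = (A.submatrix id (e s)).submatrix id σ from rfl,
      det_permute', mul_left_comm, mul_assoc]
  -- The terms with `f` injective are exactly those with `f = e s ∘ σ`, once each.
  calc (A * B).det
      = ∑ x : {s : Finset κ // s.card = k} × Equiv.Perm (Fin k),
          (A.submatrix id (e x.1 ∘ x.2)).det * ∏ i, B (e x.1 (x.2 i)) i := by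
        rw [det_mul_eq_sum_det_submatrix_mul_prod]
        refine (sum_bij_ne_zero (fun x _ _ => e x.1 ∘ x.2) (fun _ _ _ => mem_univ _) ?_ ?_
          (fun _ _ _ => rfl)).symm
        · rintro ⟨s, σ⟩ - - ⟨s', σ'⟩ - - h
          obtain rfl : s = s' := by
            have := congrArg Set.range h
            simp only [EquivLike.range_comp, e, range_orderEmbOfFin, coe_inj] at this
            exact Subtype.ext this
          exact Prod.ext rfl (Equiv.ext fun i => (orderEmbOfFin _ _).injective (congrFun h i))
        · rintro f - hf
          have hinj : Function.Injective f := by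
            by_contra h
            exact hf (by rw [det_submatrix_eq_zero_of_not_injective A h, zero_mul])
          have hcard : (univ.image f).card = k := by
            rw [card_image_of_injective _ hinj, card_univ, Fintype.card_fin]
          obtain ⟨σ, hσ⟩ := exists_perm_orderEmbOfFin_comp_eq hinj hcard
          rw [← hσ] at hf
          exact ⟨(⟨_, hcard⟩, σ), mem_univ _, hf, hσ⟩
    _ = _ := by
        rw [Fintype.sum_prod_type]
        refine sum_congr rfl fun s _ => ?_
        simp only [hsign, ← mul_sum]
        rw [det_apply' (B.submatrix _ id)]
        rfl

end Matrix

theorem Matrix.det_vandermonde_sq {R : Type*} [CommRing R] {n : ℕ} (v : Fin n → R) :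
    (vandermonde v).det ^ 2 = ∏ i, ∏ j ∈ Ioi i, (v i - v j) ^ 2 := by
  simp only [det_vandermonde, ← prod_pow]
  exact prod_congr rfl fun i _ => prod_congr rfl fun j _ => by ring

section Hankel

variable {κ : Type*} [Fintype κ]

theorem Matrix.det_hankel_sum_mul_pow {R : Type*} [CommRing R] [LinearOrder κ] (p r : κ → R)
    (k : ℕ) :
    (of fun i j : Fin k => ∑ l, r l * p l ^ ((i : ℕ) + j)).det =
      ∑ s ∈ powersetCard k univ,
        (∏ i ∈ s, r i) * ∏ i ∈ s, ∏ j ∈ s, if i < j then (p i - p j) ^ 2 else 1 := by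
  have hfac : (of fun i j : Fin k => ∑ l, r l * p l ^ ((i : ℕ) + j)) =
      (of fun (i : Fin k) l => r l * p l ^ (i : ℕ)) * of fun l (j : Fin k) => p l ^ (j : ℕ) := by
    ext i j
    simp [mul_apply, pow_add, mul_assoc]
  rw [hfac, det_mul_eq_sum_det_submatrix_mul_det_submatrix,
    sum_subtype _ fun _ => mem_powersetCard_univ]
  refine Fintype.sum_congr _ _ fun s => ?_
  set e := s.1.orderEmbOfFin s.2
  have hA : (of fun (i : Fin k) l => r l * p l ^ (i : ℕ)).submatrix id e =
      (diagonal (r ∘ e) * vandermonde (p ∘ e))ᵀ := by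
    ext i j
    simp [vandermonde]
  rw [hA, det_transpose, det_mul, det_diagonal,
    show (of fun l (j : Fin k) => p l ^ (j : ℕ)).submatrix e id = vandermonde (p ∘ e) from rfl,
    mul_assoc, ← sq, det_vandermonde_sq]
  exact congr_arg₂ (· * ·) (prod_orderEmbOfFin s.1 s.2 r)
    (prod_prod_ite_lt_eq_prod_prod_Ioi s.1 s.2 fun x y => (p x - p y) ^ 2).symm

theorem Matrix.det_hankel_sum_mul_pow_pos {p r : κ → ℝ} (hp : Function.Injective p)
    (hr : ∀ i, 0 < r i) {k : ℕ} (hk : k ≤ Fintype.card κ) :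
    0 < (of fun i j : Fin k => ∑ l, r l * p l ^ ((i : ℕ) + j)).det := by
  -- The determinant does not involve an order on `κ`; any one will do to apply the formula.
  let _ : LinearOrder κ := LinearOrder.lift' _ (Fintype.equivFin κ).injective
  rw [det_hankel_sum_mul_pow]
  obtain ⟨s₀, -, hs₀⟩ := exists_subset_card_eq (s := (univ : Finset κ)) (by simpa using hk)
  refine sum_pos (fun s _ => mul_pos (prod_pos fun i _ => hr i) ?_)
    ⟨s₀, mem_powersetCard_univ.mpr hs₀⟩
  refine prod_pos fun i _ => prod_pos fun j _ => ?_
  split_ifs with hij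
  · exact sq_pos_of_ne_zero (sub_ne_zero.mpr (hp.ne hij.ne))
  · exact one_pos

end Hankel

theorem stmt_0_general (m : ℕ) (p r : Fin m → ℝ) (hp : StrictMono p) (hr : ∀ i, 0 < r i)
    (t : ℕ → ℝ) (ht : ∀ k, t k = ∑ l, r l * p l ^ k)
    (k : ℕ) (hk2 : k ≤ m) :
    ((Matrix.of fun i j : Fin k => t ((i : ℕ) + (j : ℕ))).det =
      ∑ s ∈ Finset.powersetCard k (Finset.univ : Finset (Fin m)),
        ((∏ i ∈ s, r i) * ∏ i ∈ s, ∏ j ∈ s, (if i < j then (p i - p j) ^ 2 else 1))) ∧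
    0 < (Matrix.of fun i j : Fin k => t ((i : ℕ) + (j : ℕ))).det := by
  simp only [ht]
  exact ⟨det_hankel_sum_mul_pow p r k,
    det_hankel_sum_mul_pow_pos hp.injective hr (by simpa using hk2)⟩

theorem stmt_0 (m : ℕ) (p r : Fin m → ℝ) (hp : StrictMono p) (hr : ∀ i, 0 < r i)
    (t : ℕ → ℝ) (ht : ∀ k, t k = ∑ l, r l * p l ^ k)
    (k : ℕ) (hk1 : 1 ≤ k) (hk2 : k ≤ m) :
    ((Matrix.of fun i j : Fin k => t ((i : ℕ) + (j : ℕ))).det =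
      ∑ s ∈ Finset.powersetCard k (Finset.univ : Finset (Fin m)),
        ((∏ i ∈ s, r i) * ∏ i ∈ s, ∏ j ∈ s, (if i < j then (p i - p j) ^ 2 else 1))) ∧
    0 < (Matrix.of fun i j : Fin k => t ((i : ℕ) + (j : ℕ))).det :=
  stmt_0_general m p r hp hr t ht k hk2
end

section
/- Under the same hypotheses (distinct reals p_1 < ... < p_m, positive weights r_i, H_m the Hankel matrix of t_k = Σ r_l p_l^k), for all i, j: 1/r_j - 1/r_i = (𝐩_j + 𝐩_i) H_m^{-1} (𝐩_j - 𝐩_i)^T, where 𝐩_i = (1, p_i, ..., p_i^{m-1}). -/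
/-!
With `V` the Vandermonde matrix of `p` (its rows are the vectors `𝐩_a`), the Hankel matrix factors
as `H = Vᵀ diag(r) V`. Hence `V H⁻¹ Vᵀ = diag(r)⁻¹`, i.e. `𝐩_a H⁻¹ 𝐩_bᵀ = δ_ab / r_a`, and expanding
the bilinear form `(𝐩ⱼ + 𝐩ᵢ) H⁻¹ (𝐩ⱼ - 𝐩ᵢ)ᵀ` leaves `1/rⱼ - 1/rᵢ`.
-/

open Matrix

namespace Matrix

theorem inv_diagonal_of_ne_zero {K n : Type*} [Field K] [Fintype n] [DecidableEq n] {v : n → K}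
    (hv : ∀ i, v i ≠ 0) : (diagonal v)⁻¹ = diagonal v⁻¹ :=
  inv_eq_right_inv <| by
    rw [diagonal_mul_diagonal, ← diagonal_one]
    exact congrArg diagonal (funext fun i => mul_inv_cancel₀ (hv i))

theorem mul_inv_mul_mul_mul_cancel {R n : Type*} [CommRing R] [Fintype n] [DecidableEq n]
    {A B : Matrix n n R} (hA : IsUnit A.det) (hB : IsUnit B.det) (D : Matrix n n R) :
    A * (B * D * A)⁻¹ * B = D⁻¹ := by
  rw [mul_inv_rev, mul_inv_rev, ← Matrix.mul_assoc, ← Matrix.mul_assoc, mul_nonsing_inv _ hA,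
    Matrix.one_mul, Matrix.mul_assoc, nonsing_inv_mul _ hB, Matrix.mul_one]

theorem dotProduct_mulVec_eq_mul_mul_transpose_apply {R m n : Type*} [CommRing R] [Fintype n]
    (A : Matrix m n R) (M : Matrix n n R) (a b : m) :
    A a ⬝ᵥ M *ᵥ A b = (A * M * Aᵀ) a b := by
  rw [dotProduct_mulVec]; rfl

theorem vandermonde_transpose_mul_diagonal_mul_vandermonde {R : Type*} [CommRing R] {n : ℕ}
    (p r : Fin n → R) :
    (vandermonde p)ᵀ * diagonal r * vandermonde p =
      of fun i j : Fin n => ∑ l, r l * p l ^ ((i : ℕ) + j) := by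
  ext i j
  rw [mul_apply]
  simp only [mul_diagonal, transpose_apply, vandermonde_apply, of_apply, pow_add]
  exact Finset.sum_congr rfl fun l _ => by ring

end Matrix

theorem stmt_5_general (m : ℕ) (p r : Fin m → ℝ) (hp : StrictMono p) (hr : ∀ i, 0 < r i)
    (t : ℕ → ℝ) (ht : ∀ k, t k = ∑ l, r l * p l ^ k)
    (H : Matrix (Fin m) (Fin m) ℝ)
    (hH : H = Matrix.of fun i j : Fin m => t ((i : ℕ) + (j : ℕ)))
    (i j : Fin m) :
    dotProduct
        ((fun n : Fin m => p j ^ (n : ℕ)) + (fun n : Fin m => p i ^ (n : ℕ)))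
        (H⁻¹.mulVec ((fun n : Fin m => p j ^ (n : ℕ)) - (fun n : Fin m => p i ^ (n : ℕ)))) =
      (r j)⁻¹ - (r i)⁻¹ := by
  set V := vandermonde p
  have hV : IsUnit V.det := (det_vandermonde_ne_zero_iff.2 hp.injective).isUnit
  have hHV : H = Vᵀ * diagonal r * V := by
    simp only [hH, ht, V, vandermonde_transpose_mul_diagonal_mul_vandermonde]
  have hgram (a b : Fin m) : V a ⬝ᵥ H⁻¹ *ᵥ V b = diagonal (fun l => (r l)⁻¹) a b := by
    rw [dotProduct_mulVec_eq_mul_mul_transpose_apply, hHV,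
      mul_inv_mul_mul_mul_cancel hV (by rwa [det_transpose]),
      inv_diagonal_of_ne_zero fun l => (hr l).ne']
    rfl
  change (V j + V i) ⬝ᵥ H⁻¹ *ᵥ (V j - V i) = _
  simp only [add_dotProduct, mulVec_sub, dotProduct_sub, hgram, diagonal_apply]
  rcases eq_or_ne i j with rfl | hij
  · simp
  · simp [hij, hij.symm]

theorem stmt_5 (m : ℕ) (p r : Fin m → ℝ) (hp : StrictMono p) (hr : ∀ i, 0 < r i)
    (t : ℕ → ℝ) (ht : ∀ k, t k = ∑ l, r l * p l ^ k)
    (H : Matrix (Fin m) (Fin m) ℝ)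
    (hH : H = Matrix.of fun i j : Fin m => t ((i : ℕ) + (j : ℕ)))
    (hinv : IsUnit H.det) (i j : Fin m) :
    dotProduct
        ((fun n : Fin m => p j ^ (n : ℕ)) + (fun n : Fin m => p i ^ (n : ℕ)))
        (H⁻¹.mulVec ((fun n : Fin m => p j ^ (n : ℕ)) - (fun n : Fin m => p i ^ (n : ℕ)))) =
      (r j)⁻¹ - (r i)⁻¹ :=
  stmt_5_general m p r hp hr t ht H hH i j
end

section
/- Let p_1, ..., p_m be distinct reals, r_i positive integers, t_k = Σ_l r_l p_l^k. Then each elementary symmetric function σ_k of p_1, ..., p_m can be written as a rational function (ratio of polynomials with integer coefficients) of t_0, t_1, ..., t_{2m-1}; specifically σ_k = D_m^{-1} · M_k where M_k is the minor of the bordered Hankel matrix obtained by deleting row m+1 and column m-k+1, up to sign (-1)^k. -/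
open Finset Matrix

lemma det_updateCol_sum'' {n : Type*} [DecidableEq n] [Fintype n] {R : Type*} [CommRing R]
    (A : Matrix n n R) (j : n) {ι : Type*} (s : Finset ι) (f : ι → n → R) :
    (A.updateCol j (fun i => ∑ x ∈ s, f x i)).det = ∑ x ∈ s, (A.updateCol j (f x)).det := by
  rw [← det_transpose, ← updateRow_transpose]
  have : (fun i => ∑ x ∈ s, f x i) = ∑ x ∈ s, f x := by funext i; simp
  rw [this]
  have h1 : ∀ v : n → R, (Aᵀ.updateRow j v) = Function.update Aᵀ j v := fun v => rfl
  have key : det (Function.update Aᵀ j (∑ x ∈ s, f x)) =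
      ∑ x ∈ s, det (Function.update Aᵀ j (f x)) :=
    (detRowAlternating : (n → R) [⋀^n]→ₗ[R] R).toMultilinearMap.map_update_sum s j f Aᵀ
  rw [h1, key]
  refine Finset.sum_congr rfl fun x _ => ?_
  rw [← h1, updateRow_transpose, det_transpose]

lemma pow_card_eq_sum (m : ℕ) (p : Fin m → ℝ) (l : Fin m) :
    p l ^ m = ∑ j : Fin m, ((-1 : ℝ) ^ (m - (j : ℕ) + 1) *
      (∑ s ∈ powersetCard (m - (j : ℕ)) (univ : Finset (Fin m)), ∏ i ∈ s, p i)) * p l ^ (j : ℕ) := by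
  set f : Polynomial ℝ := ∏ i : Fin m, (Polynomial.X - Polynomial.C (p i)) with hf
  have hmonic : f.Monic := Polynomial.monic_prod_of_monic _ _ fun i _ => Polynomial.monic_X_sub_C _
  have hdeg : f.natDegree = m := by
    rw [hf, Polynomial.natDegree_prod_of_monic _ _ fun i _ => Polynomial.monic_X_sub_C _]
    simp
  have heval : f.eval (p l) = 0 := by
    rw [hf, Polynomial.eval_prod]
    exact Finset.prod_eq_zero (Finset.mem_univ l) (by simp)
  have hcoeff : ∀ j : ℕ, j ≤ m → f.coeff j = (-1 : ℝ) ^ (m - j) *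
      ∑ s ∈ powersetCard (m - j) (univ : Finset (Fin m)), ∏ i ∈ s, p i := by
    intro j hj
    have h1 : f = (((univ : Finset (Fin m)).val.map p).map
        (fun t => Polynomial.X - Polynomial.C t)).prod := by
      rw [hf, Multiset.map_map, Finset.prod_eq_multiset_prod]
      rfl
    have hcard : Multiset.card ((univ : Finset (Fin m)).val.map p) = m := by simp
    rw [h1, Multiset.prod_X_sub_C_coeff _ (by rw [hcard]; exact hj), hcard,
      Finset.esymm_map_val]
  have hsum : ∑ j ∈ Finset.range (m + 1), f.coeff j * p l ^ j = 0 := by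
    rw [← Polynomial.eval_eq_sum_range' (by omega : f.natDegree < m + 1)] at *
    exact heval
  rw [Finset.sum_range_succ] at hsum
  have hlead : f.coeff m = 1 := by
    have := hmonic.coeff_natDegree
    rwa [hdeg] at this
  rw [hlead, one_mul] at hsum
  have : p l ^ m = -∑ j ∈ Finset.range m, f.coeff j * p l ^ j := by linarith
  rw [this, ← Finset.sum_neg_distrib, ← Fin.sum_univ_eq_sum_range (fun j => -(f.coeff j * p l ^ j))]
  refine Finset.sum_congr rfl fun j _ => ?_
  rw [hcoeff j (by omega)]
  ring

lemma core_det (m k : ℕ) (hk1 : 1 ≤ k) (hk2 : k ≤ m) (p : Fin m → ℝ) :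
    (Matrix.of fun l j : Fin m =>
        p l ^ (if (j : ℕ) < m - k then (j : ℕ) else (j : ℕ) + 1)).det =
      (∑ s ∈ powersetCard k (univ : Finset (Fin m)), ∏ i ∈ s, p i) * (Matrix.vandermonde p).det := by
  have hm : 1 ≤ m := le_trans hk1 hk2
  set a := m - k with ha
  have ham : a + k = m := by omega
  set E : ℕ → ℝ := fun n => ∑ s ∈ powersetCard n (univ : Finset (Fin m)), ∏ i ∈ s, p i with hE
  set N : Matrix (Fin m) (Fin m) ℝ :=
    Matrix.of fun l j : Fin m => p l ^ (if (j : ℕ) < a then (j : ℕ) else (j : ℕ) + 1) with hN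
  set L : Fin m := ⟨m - 1, by omega⟩ with hL
  set g : Fin m → ℝ := fun j => (-1 : ℝ) ^ (m - (j : ℕ) + 1) * E (m - (j : ℕ)) with hg
  -- Step B : N equals itself with last column replaced by the linear combination
  have hB : N = N.updateCol L (fun l => ∑ j : Fin m, g j * p l ^ (j : ℕ)) := by
    ext l j
    rw [Matrix.updateCol_apply]
    split_ifs with h
    · subst h
      rw [← pow_card_eq_sum m p l]
      show p l ^ (if (m - 1 : ℕ) < a then (m-1 : ℕ) else (m-1 : ℕ) + 1) = p l ^ m
      rw [if_neg (by omega)]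
      congr 1
      omega
    · rfl
  -- the permutation
  obtain ⟨kk, rfl⟩ : ∃ kk, k = kk + 1 := ⟨k - 1, by omega⟩
  set e : (Fin a ⊕ Fin (kk+1)) ≃ Fin m := finSumFinEquiv.trans (finCongr ham) with he
  set d : Equiv.Perm (Fin m) :=
    e.permCongr (Equiv.sumCongr (Equiv.refl (Fin a)) (finRotate (kk+1))) with hd
  have hdval : ∀ j : Fin m, ((d j : Fin m) : ℕ) =
      if (j : ℕ) = m - 1 then a else (if (j : ℕ) < a then (j : ℕ) else (j : ℕ) + 1) := by
    intro j
    by_cases hja : (j : ℕ) < a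
    · have hsymm : e.symm j = Sum.inl ⟨(j : ℕ), hja⟩ := by
        rw [Equiv.symm_apply_eq]
        apply Fin.ext
        simp [he]
      have : d j = e (Sum.inl ⟨(j : ℕ), hja⟩) := by
        rw [hd, Equiv.permCongr_apply, hsymm]; rfl
      rw [this]
      have : (e (Sum.inl ⟨(j : ℕ), hja⟩) : ℕ) = (j : ℕ) := by simp [he]
      rw [this, if_neg (by omega), if_pos hja]
    · have hjk : (j : ℕ) - a < kk + 1 := by omega
      have hsymm : e.symm j = Sum.inr ⟨(j : ℕ) - a, hjk⟩ := by
        rw [Equiv.symm_apply_eq]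
        apply Fin.ext
        simp [he]
        omega
      have h1 : d j = e (Sum.inr (finRotate (kk+1) ⟨(j : ℕ) - a, hjk⟩)) := by
        rw [hd, Equiv.permCongr_apply, hsymm]; rfl
      have h2 : ∀ x : Fin (kk+1), (e (Sum.inr x) : ℕ) = a + (x : ℕ) := by
        intro x; simp [he]
      have hv : ((d j : Fin m) : ℕ) =
          a + ((finRotate (kk+1) ⟨(j : ℕ) - a, hjk⟩ : Fin (kk+1)) : ℕ) := by
        rw [h1, h2]
      have rotval : ((finRotate (kk+1) ⟨(j : ℕ) - a, hjk⟩ : Fin (kk+1)) : ℕ) =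
          if (j : ℕ) - a = kk then 0 else (j : ℕ) - a + 1 := by
        rw [finRotate_succ_apply, Fin.val_add_one]
        by_cases hl : (⟨(j : ℕ) - a, hjk⟩ : Fin (kk+1)) = Fin.last kk
        · rw [if_pos hl, if_pos]
          have := congrArg Fin.val hl
          simpa using this
        · rw [if_neg hl, if_neg]
          intro h
          exact hl (Fin.ext (by simpa using h))
      have hjlt : (j : ℕ) < m := j.isLt
      rw [hv, rotval]
      split_ifs <;> omega
  -- Step D matrix identity
  have hmat : N.updateCol L (fun l => p l ^ a) = (Matrix.vandermonde p).submatrix id d := by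
    ext l j
    rw [Matrix.submatrix_apply, Matrix.updateCol_apply]
    show _ = p l ^ ((d j : Fin m) : ℕ)
    rw [hdval j]
    by_cases hjL : j = L
    · rw [if_pos hjL, if_pos (show ((j : Fin m) : ℕ) = m - 1 by rw [hjL])]
    · rw [if_neg hjL, if_neg (fun h => hjL (Fin.ext h))]
      rfl
  -- sign computation
  have hsign : ((Equiv.Perm.sign d : ℤ) : ℝ) = (-1 : ℝ) ^ kk := by
    rw [hd, Equiv.Perm.sign_permCongr, Equiv.Perm.sign_sumCongr, Equiv.Perm.sign_refl,
      sign_finRotate, one_mul]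
    push_cast
    rfl
  -- putting together
  have hdet : N.det = ∑ j : Fin m, g j * (N.updateCol L (fun l => p l ^ (j : ℕ))).det := by
    conv_lhs => rw [hB]
    rw [det_updateCol_sum'' N L univ (fun j l => g j * p l ^ (j : ℕ))]
    refine Finset.sum_congr rfl fun j _ => ?_
    have : (fun l => g j * p l ^ (j : ℕ)) = g j • (fun l => p l ^ (j : ℕ)) := rfl
    rw [this, Matrix.det_updateCol_smul]
  have hvanish : ∀ j : Fin m, (j : ℕ) ≠ a →
      (N.updateCol L (fun l => p l ^ (j : ℕ))).det = 0 := by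
    intro j hja
    by_cases hlt : (j : ℕ) < a
    · refine Matrix.det_zero_of_column_eq (i := j) (j := L) ?_ fun l => ?_
      · intro h; rw [h] at hlt; simp [hL] at hlt; omega
      · rw [Matrix.updateCol_apply, Matrix.updateCol_apply, if_pos rfl,
          if_neg (by intro h; rw [h] at hlt; simp [hL] at hlt; omega)]
        show p l ^ (if (j : ℕ) < a then (j : ℕ) else (j : ℕ) + 1) = _
        rw [if_pos hlt]
    · have hgt : a < (j : ℕ) := by omega
      have hjm : (j : ℕ) < m := j.isLt
      set j' : Fin m := ⟨(j : ℕ) - 1, by omega⟩ with hj'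
      have hj'L : j' ≠ L := by
        intro h
        have := congrArg Fin.val h
        simp [hj', hL] at this
        omega
      refine Matrix.det_zero_of_column_eq (i := j') (j := L) hj'L fun l => ?_
      rw [Matrix.updateCol_apply, Matrix.updateCol_apply, if_pos rfl, if_neg hj'L]
      show p l ^ (if ((j' : Fin m) : ℕ) < a then ((j' : Fin m) : ℕ) else ((j' : Fin m) : ℕ) + 1) = _
      rw [if_neg (by simp [hj']; omega)]
      congr 1
      simp [hj']
      omega
  have hone : det N = g ⟨a, by omega⟩ * (N.updateCol L (fun l => p l ^ a)).det := by
    rw [hdet]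
    exact Fintype.sum_eq_single (⟨a, by omega⟩ : Fin m) fun j hne => by
      rw [hvanish j (fun h => hne (Fin.ext h)), mul_zero]
  rw [hone, hmat, Matrix.det_permute', hsign]
  have hga : g ⟨a, by omega⟩ = (-1 : ℝ) ^ (kk + 2) * E (kk + 1) := by
    rw [hg]
    show (-1 : ℝ) ^ (m - a + 1) * E (m - a) = _
    congr 2 <;> omega
  have hEdef : (∑ s ∈ powersetCard (kk+1) (univ : Finset (Fin m)), ∏ i ∈ s, p i) = E (kk + 1) :=
    rfl
  rw [hga, hEdef]
  have hpow : (-1 : ℝ) ^ (kk + 2) * (-1 : ℝ) ^ kk = 1 := by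
    rw [← pow_add, show kk + 2 + kk = 2 * (kk + 1) from by ring, pow_mul]
    norm_num
  linear_combination E (kk + 1) * (Matrix.vandermonde p).det * hpow

theorem stmt_7 (m : ℕ) (p : Fin m → ℝ) (r : Fin m → ℕ)
    (hp : Function.Injective p) (hr : ∀ i, 0 < r i)
    (t : ℕ → ℝ) (ht : ∀ k, t k = ∑ l, (r l : ℝ) * p l ^ k)
    (k : ℕ) (hk1 : 1 ≤ k) (hk2 : k ≤ m) :
    (∃ P Q : MvPolynomial (Fin (2 * m)) ℤ,
      MvPolynomial.aeval (fun i : Fin (2 * m) => t (i : ℕ)) Q ≠ 0 ∧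
      (∑ s ∈ Finset.powersetCard k (Finset.univ : Finset (Fin m)), ∏ i ∈ s, p i) =
        MvPolynomial.aeval (fun i : Fin (2 * m) => t (i : ℕ)) P /
          MvPolynomial.aeval (fun i : Fin (2 * m) => t (i : ℕ)) Q) ∧
    (∑ s ∈ Finset.powersetCard k (Finset.univ : Finset (Fin m)), ∏ i ∈ s, p i) =
      ((Matrix.of fun i j : Fin m => t ((i : ℕ) + (j : ℕ))).det)⁻¹ *
        (Matrix.of fun i j : Fin m =>
          t ((i : ℕ) + (((⟨m - k, by omega⟩ : Fin (m + 1)).succAbove j : Fin (m + 1)) : ℕ))).det := by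
  have hm : 1 ≤ m := le_trans hk1 hk2
  have hsucc : ∀ j : Fin m,
      (((⟨m - k, by omega⟩ : Fin (m + 1)).succAbove j : Fin (m + 1)) : ℕ) =
        if (j : ℕ) < m - k then (j : ℕ) else (j : ℕ) + 1 := by
    intro j
    rw [Fin.succAbove]
    have hiff : (Fin.castSucc j < (⟨m - k, by omega⟩ : Fin (m + 1))) ↔ (j : ℕ) < m - k := by
      simp [Fin.lt_def]
    by_cases h : (j : ℕ) < m - k
    · rw [if_pos (hiff.mpr h), if_pos h]; rfl
    · rw [if_neg (fun hh => h (hiff.mp hh)), if_neg h]; rfl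
  set A : Matrix (Fin m) (Fin m) ℝ := Matrix.of fun i l : Fin m => (r l : ℝ) * p l ^ (i : ℕ)
    with hA
  set V : Matrix (Fin m) (Fin m) ℝ := Matrix.vandermonde p with hV
  set N : Matrix (Fin m) (Fin m) ℝ :=
    Matrix.of fun l j : Fin m => p l ^ (if (j : ℕ) < m - k then (j : ℕ) else (j : ℕ) + 1) with hN
  have hT : (Matrix.of fun i j : Fin m => t ((i : ℕ) + (j : ℕ))) = A * V := by
    ext i j
    rw [Matrix.mul_apply]
    show t ((i : ℕ) + (j : ℕ)) = _
    rw [ht]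
    refine Finset.sum_congr rfl fun l _ => ?_
    show (r l : ℝ) * p l ^ ((i : ℕ) + (j : ℕ)) = (r l : ℝ) * p l ^ (i : ℕ) * p l ^ (j : ℕ)
    rw [pow_add, mul_assoc]
  have hM : (Matrix.of fun i j : Fin m =>
      t ((i : ℕ) + (((⟨m - k, by omega⟩ : Fin (m + 1)).succAbove j : Fin (m + 1)) : ℕ))) = A * N := by
    ext i j
    rw [Matrix.mul_apply]
    show t ((i : ℕ) + _) = _
    rw [hsucc j, ht]
    refine Finset.sum_congr rfl fun l _ => ?_
    show (r l : ℝ) * p l ^ ((i : ℕ) + _) = (r l : ℝ) * p l ^ (i : ℕ) * p l ^ _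
    rw [pow_add, mul_assoc]
  have hdetA : A.det = (∏ l, (r l : ℝ)) * V.det := by
    have : A = Vᵀ * Matrix.diagonal (fun l => (r l : ℝ)) := by
      ext i l
      rw [Matrix.mul_diagonal]
      show (r l : ℝ) * p l ^ (i : ℕ) = p l ^ (i : ℕ) * (r l : ℝ)
      ring
    rw [this, Matrix.det_mul, Matrix.det_transpose, Matrix.det_diagonal]
    ring
  have hdetN : N.det = (∑ s ∈ powersetCard k (univ : Finset (Fin m)), ∏ i ∈ s, p i) * V.det :=
    core_det m k hk1 hk2 p
  have hVne : V.det ≠ 0 := Matrix.det_vandermonde_ne_zero_iff.mpr hp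
  have hrne : (∏ l, (r l : ℝ)) ≠ 0 :=
    Finset.prod_ne_zero_iff.mpr fun l _ => Nat.cast_ne_zero.mpr (hr l).ne'
  have hdetT : (Matrix.of fun i j : Fin m => t ((i : ℕ) + (j : ℕ))).det =
      (∏ l, (r l : ℝ)) * V.det * V.det := by
    rw [hT, Matrix.det_mul, hdetA]
  have hdetM : (Matrix.of fun i j : Fin m =>
      t ((i : ℕ) + (((⟨m - k, by omega⟩ : Fin (m + 1)).succAbove j : Fin (m + 1)) : ℕ))).det =
      (∏ l, (r l : ℝ)) * V.det *
        ((∑ s ∈ powersetCard k (univ : Finset (Fin m)), ∏ i ∈ s, p i) * V.det) := by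
    rw [hM, Matrix.det_mul, hdetA, hdetN]
  have hTne : (Matrix.of fun i j : Fin m => t ((i : ℕ) + (j : ℕ))).det ≠ 0 := by
    rw [hdetT]
    exact mul_ne_zero (mul_ne_zero hrne hVne) hVne
  have key : (∑ s ∈ Finset.powersetCard k (Finset.univ : Finset (Fin m)), ∏ i ∈ s, p i) =
      ((Matrix.of fun i j : Fin m => t ((i : ℕ) + (j : ℕ))).det)⁻¹ *
        (Matrix.of fun i j : Fin m =>
          t ((i : ℕ) + (((⟨m - k, by omega⟩ : Fin (m + 1)).succAbove j : Fin (m + 1)) : ℕ))).det := by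
    rw [hdetT, hdetM]
    field_simp
  refine ⟨?_, key⟩
  -- polynomial part
  set P : MvPolynomial (Fin (2 * m)) ℤ :=
    (Matrix.of fun i j : Fin m =>
      (MvPolynomial.X (⟨(i : ℕ) + (if (j : ℕ) < m - k then (j : ℕ) else (j : ℕ) + 1),
        by have := i.isLt; have := j.isLt; split_ifs <;> omega⟩ : Fin (2 * m)) :
        MvPolynomial (Fin (2 * m)) ℤ)).det with hP
  set Q : MvPolynomial (Fin (2 * m)) ℤ :=
    (Matrix.of fun i j : Fin m =>
      (MvPolynomial.X (⟨(i : ℕ) + (j : ℕ),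
        by have := i.isLt; have := j.isLt; omega⟩ : Fin (2 * m)) :
        MvPolynomial (Fin (2 * m)) ℤ)).det with hQ
  have haQ : MvPolynomial.aeval (fun i : Fin (2 * m) => t (i : ℕ)) Q =
      (Matrix.of fun i j : Fin m => t ((i : ℕ) + (j : ℕ))).det := by
    rw [hQ, AlgHom.map_det]
    congr 1
    ext i j
    simp [Matrix.map_apply]
  have haP : MvPolynomial.aeval (fun i : Fin (2 * m) => t (i : ℕ)) P =
      (Matrix.of fun i j : Fin m =>
        t ((i : ℕ) + (((⟨m - k, by omega⟩ : Fin (m + 1)).succAbove j : Fin (m + 1)) : ℕ))).det := by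
    rw [hP, AlgHom.map_det]
    congr 1
    ext i j
    simp [Matrix.map_apply, hsucc j]
  exact ⟨P, Q, by rw [haQ]; exact hTne, by rw [haP, haQ, key, inv_mul_eq_div]⟩
end

section
/- With the sequence ε_k defined by ε_0 = 0 and ε_{k+1}^2 = (Σ_{i<j} 1/((p_i-p_j)^2 - ε_k^2))^{-1} + ε_k^2 for distinct reals p_1 < ... < p_m (m ≥ 2), the limit of ε_k as k → ∞ equals μ = min_{i<j} |p_i - p_j|. -/
open Finset Filter

set_option maxHeartbeats 1000000 in
theorem stmt_9 (m : ℕ) (hm : 2 ≤ m) (p : Fin m → ℝ) (hp : StrictMono p)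
    (μ : ℝ) (hμ : IsLeast {d : ℝ | ∃ i j : Fin m, i < j ∧ d = |p i - p j|} μ)
    (e : ℕ → ℝ) (he0 : e 0 = 0) (hen : ∀ k, 0 ≤ e k)
    (herec : ∀ k, (e (k + 1)) ^ 2 =
      (∑ i : Fin m, ∑ j : Fin m,
        (if i < j then ((p i - p j) ^ 2 - (e k) ^ 2)⁻¹ else 0))⁻¹ + (e k) ^ 2) :
    Tendsto e atTop (nhds μ) := by
  obtain ⟨⟨i0, j0, hij0, hμval⟩, hlb⟩ := hμ
  have h0 : 0 < μ := by
    rw [hμval]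
    exact abs_pos.2 (sub_ne_zero.2 (ne_of_lt (hp hij0)))
  have hpair : ∀ i j : Fin m, i < j → μ ^ 2 ≤ (p i - p j) ^ 2 := by
    intro i j h
    have h1 : μ ≤ |p i - p j| := hlb ⟨i, j, h, rfl⟩
    have h2 : |p i - p j| ^ 2 = (p i - p j) ^ 2 := sq_abs _
    nlinarith [abs_nonneg (p i - p j)]
  have hμ0 : (p i0 - p j0) ^ 2 = μ ^ 2 := by rw [hμval, sq_abs]
  have hsq : ∀ y : ℝ, 0 ≤ y → y ^ 2 = μ ^ 2 → y = μ := by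
    intro y hy h
    have h1 : (y - μ) * (y + μ) = 0 := by
      have : (y - μ) * (y + μ) = y ^ 2 - μ ^ 2 := by ring
      rw [this, h, sub_self]
    rcases mul_eq_zero.1 h1 with h2 | h2 <;> linarith
  obtain ⟨S, hS⟩ : ∃ S : ℝ → ℝ, S = fun x => ∑ i : Fin m, ∑ j : Fin m,
      (if i < j then ((p i - p j) ^ 2 - x ^ 2)⁻¹ else 0) := ⟨_, rfl⟩
  have hrec : ∀ k, (e (k + 1)) ^ 2 = (S (e k))⁻¹ + (e k) ^ 2 := by
    intro k
    rw [hS]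
    exact herec k
  rcases eq_or_lt_of_le hm with hm2 | hm3
  · -- m = 2
    subst hm2
    have h01 : (p 0 - p 1) ^ 2 = μ ^ 2 := by
      fin_cases i0 <;> fin_cases j0 <;>
        first
          | exact absurd hij0 (by decide)
          | simpa using hμ0
    have hSx : ∀ x : ℝ, S x = ((p 0 - p 1) ^ 2 - x ^ 2)⁻¹ := by
      intro x
      rw [hS]
      simp [Fin.sum_univ_two, show ¬(0 : Fin 2) < 0 from by decide,
        show (0 : Fin 2) < 1 from by decide, show ¬(1 : Fin 2) < 0 from by decide,
        show ¬(1 : Fin 2) < 1 from by decide]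
    have he1' : e 1 = μ := by
      apply hsq _ (hen _)
      have h2 := hrec 0
      rw [hSx, he0] at h2
      norm_num at h2
      rw [h2, h01]
    have he1 : ∀ k, e k = μ → e (k + 1) = μ := by
      intro k hk
      apply hsq _ (hen _)
      have h2 := hrec k
      rw [hSx, hk, h01, sub_self, inv_zero, inv_zero, zero_add] at h2
      exact h2
    have hkμ : ∀ k, e (k + 1) = μ := by
      intro k
      induction k with
      | zero => exact he1'
      | succ n ih => exact he1 _ ih
    have heq : (fun _ : ℕ => μ) =ᶠ[atTop] e := by
      filter_upwards [eventually_ge_atTop 1] with k hk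
      obtain ⟨n, rfl⟩ : ∃ n, k = n + 1 := ⟨k - 1, by omega⟩
      exact (hkμ n).symm
    exact tendsto_const_nhds.congr' heq
  · -- m ≥ 3
    have ha : 0 < m := by omega
    have hb' : 1 < m := by omega
    have hc' : 2 < m := hm3
    set a : Fin m := ⟨0, ha⟩ with haa
    set b : Fin m := ⟨1, hb'⟩ with hbb
    set c : Fin m := ⟨2, hc'⟩ with hcc
    have hab : a < b := by simp [haa, hbb, Fin.lt_def]
    have hbc : b < c := by simp [hbb, hcc, Fin.lt_def]
    have hac : a < c := by simp [haa, hcc, Fin.lt_def]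
    have habs : ∀ i j : Fin m, i < j → |p i - p j| = p j - p i := by
      intro i j h
      rw [abs_sub_comm, abs_of_pos (sub_pos.2 (hp h))]
    have hne : (i0, j0) ≠ (a, c) := by
      intro h
      rw [Prod.mk.injEq] at h
      have h1 : μ ≤ |p a - p b| := hlb ⟨a, b, hab, rfl⟩
      rw [habs a b hab] at h1
      have h2 : μ = p c - p a := by rw [hμval, h.1, h.2, habs a c hac]
      have h3 := hp hbc
      linarith
    have hterm_nonneg : ∀ x : ℝ, x ^ 2 ≤ μ ^ 2 → ∀ i j : Fin m,
        0 ≤ (if i < j then ((p i - p j) ^ 2 - x ^ 2)⁻¹ else 0) := by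
      intro x hx i j
      split_ifs with h
      · exact inv_nonneg.2 (by linarith [hpair i j h])
      · exact le_refl 0
    have hlow : ∀ x : ℝ, x ^ 2 < μ ^ 2 → (μ ^ 2 - x ^ 2)⁻¹ < S x := by
      intro x hx
      simp only [hS]
      have hsum : (∑ i : Fin m, ∑ j : Fin m,
            (if i < j then ((p i - p j) ^ 2 - x ^ 2)⁻¹ else 0))
          = ∑ z ∈ (univ ×ˢ univ : Finset (Fin m × Fin m)),
              (if z.1 < z.2 then ((p z.1 - p z.2) ^ 2 - x ^ 2)⁻¹ else 0) := by
        rw [Finset.sum_product]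
      rw [hsum]
      have hsub : ({(i0, j0), (a, c)} : Finset (Fin m × Fin m)) ⊆ univ ×ˢ univ := by
        intro z _
        simp
      have h2 : ∑ z ∈ ({(i0, j0), (a, c)} : Finset (Fin m × Fin m)),
            (if z.1 < z.2 then ((p z.1 - p z.2) ^ 2 - x ^ 2)⁻¹ else 0)
          ≤ ∑ z ∈ (univ ×ˢ univ : Finset (Fin m × Fin m)),
              (if z.1 < z.2 then ((p z.1 - p z.2) ^ 2 - x ^ 2)⁻¹ else 0) :=
        Finset.sum_le_sum_of_subset_of_nonneg hsub
          (fun z _ _ => hterm_nonneg x hx.le z.1 z.2)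
      rw [Finset.sum_pair hne] at h2
      refine lt_of_lt_of_le ?_ h2
      simp only [if_pos hij0, if_pos hac, hμ0]
      have h4 : 0 < ((p a - p c) ^ 2 - x ^ 2)⁻¹ :=
        inv_pos.2 (by linarith [hpair a c hac])
      linarith
    have hup : ∀ x : ℝ, x ^ 2 < μ ^ 2 → S x ≤ ((m : ℝ) * m) * (μ ^ 2 - x ^ 2)⁻¹ := by
      intro x hx
      simp only [hS]
      have hbnd : ∀ i j : Fin m,
          (if i < j then ((p i - p j) ^ 2 - x ^ 2)⁻¹ else 0) ≤ (μ ^ 2 - x ^ 2)⁻¹ := by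
        intro i j
        split_ifs with h
        · exact inv_anti₀ (by linarith) (by linarith [hpair i j h])
        · exact inv_nonneg.2 (by linarith)
      calc (∑ i : Fin m, ∑ j : Fin m, (if i < j then ((p i - p j) ^ 2 - x ^ 2)⁻¹ else 0))
          ≤ ∑ _i : Fin m, ∑ _j : Fin m, (μ ^ 2 - x ^ 2)⁻¹ :=
            Finset.sum_le_sum (fun i _ => Finset.sum_le_sum (fun j _ => hbnd i j))
        _ = ((m : ℝ) * m) * (μ ^ 2 - x ^ 2)⁻¹ := by
            simp only [Finset.sum_const, Finset.card_univ, Fintype.card_fin, nsmul_eq_mul]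
            ring
    have hinv : ∀ k, e k < μ := by
      intro k
      induction k with
      | zero => rw [he0]; exact h0
      | succ n ih =>
        have hx : (e n) ^ 2 < μ ^ 2 := by nlinarith [hen n]
        have h1 := hlow (e n) hx
        have hpos : 0 < (μ ^ 2 - (e n) ^ 2)⁻¹ := inv_pos.2 (by linarith)
        have h2 : (S (e n))⁻¹ < μ ^ 2 - (e n) ^ 2 := by
          calc (S (e n))⁻¹ < ((μ ^ 2 - (e n) ^ 2)⁻¹)⁻¹ := inv_strictAnti₀ hpos h1
            _ = μ ^ 2 - (e n) ^ 2 := inv_inv _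
        have h3 := hrec n
        nlinarith [hen (n + 1), h0]
    have hmono : Monotone e := by
      apply monotone_nat_of_le_succ
      intro k
      have hx : (e k) ^ 2 ≤ μ ^ 2 := by nlinarith [hen k, hinv k]
      have hS0 : 0 ≤ S (e k) := by
        simp only [hS]
        exact Finset.sum_nonneg fun i _ =>
          Finset.sum_nonneg fun j _ => hterm_nonneg _ hx i j
      have h3 := hrec k
      nlinarith [hen k, hen (k + 1), inv_nonneg.2 hS0, sq_nonneg (e k + e (k + 1))]
    have hbdd : BddAbove (Set.range e) := by
      refine ⟨μ, ?_⟩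
      rintro y ⟨k, rfl⟩
      exact (hinv k).le
    have htend' := tendsto_atTop_ciSup hmono hbdd
    obtain ⟨L, hL⟩ : ∃ L : ℝ, L = ⨆ k, e k := ⟨_, rfl⟩
    have htend : Tendsto e atTop (nhds L) := hL ▸ htend'
    have hLle : L ≤ μ := hL ▸ ciSup_le fun k => (hinv k).le
    have hkL : ∀ k, e k ≤ L := fun k => hL ▸ le_ciSup hbdd k
    have hL0 : 0 ≤ L := le_trans (hen 0) (hkL 0)
    have hmpos : (0 : ℝ) < (m : ℝ) := by exact_mod_cast (by omega : 0 < m)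
    have hm2pos : (0 : ℝ) < (m : ℝ) * m := mul_pos hmpos hmpos
    have hLeq : L = μ := by
      by_contra hne'
      have hLlt : L < μ := lt_of_le_of_ne hLle hne'
      have hc : 0 < (μ ^ 2 - L ^ 2) / ((m : ℝ) * m) := by
        apply div_pos (by nlinarith) hm2pos
      obtain ⟨cst, hcst⟩ : ∃ c : ℝ, c = (μ ^ 2 - L ^ 2) / ((m : ℝ) * m) := ⟨_, rfl⟩
      rw [← hcst] at hc
      have hstep : ∀ k, (e k) ^ 2 + cst ≤ (e (k + 1)) ^ 2 := by
        intro k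
        have hek : e k ≤ L := hkL k
        have hx2 : (e k) ^ 2 ≤ L ^ 2 := by nlinarith [hen k]
        have hxlt : (e k) ^ 2 < μ ^ 2 := by nlinarith
        have h1 := hlow (e k) hxlt
        have h2 := hup (e k) hxlt
        have hSpos : 0 < S (e k) := lt_trans (inv_pos.2 (by nlinarith)) h1
        have h3 : (((m : ℝ) * m) * (μ ^ 2 - (e k) ^ 2)⁻¹)⁻¹ ≤ (S (e k))⁻¹ :=
          inv_anti₀ hSpos h2
        have h4 : (((m : ℝ) * m) * (μ ^ 2 - (e k) ^ 2)⁻¹)⁻¹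
            = (μ ^ 2 - (e k) ^ 2) / ((m : ℝ) * m) := by
          rw [mul_inv, inv_inv]
          ring
        rw [h4] at h3
        have h5 : cst ≤ (S (e k))⁻¹ := by
          refine le_trans ?_ h3
          rw [hcst]
          gcongr <;> nlinarith
        have h6 := hrec k
        linarith
      have hgrow : ∀ k : ℕ, (k : ℝ) * cst ≤ (e k) ^ 2 := by
        intro k
        induction k with
        | zero => simp [he0]
        | succ n ih =>
          have := hstep n
          push_cast
          linarith
      obtain ⟨n, hn⟩ := exists_nat_gt (μ ^ 2 / cst)
      have h7 : μ ^ 2 < (n : ℝ) * cst := by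
        rw [div_lt_iff₀ hc] at hn
        linarith
      have h8 : (e n) ^ 2 ≤ L ^ 2 := by nlinarith [hen n, hkL n]
      have h9 : L ^ 2 ≤ μ ^ 2 := by nlinarith
      linarith [hgrow n]
    rw [hLeq] at htend
    exact htend
end

section
/- Define w_0 = 0 and w_{k+1}^2 = w_k^2 + (Σ_{l=1}^{m-1} (m-l)/(l^2 - w_k^2))^{-1} for a fixed integer m ≥ 3. Then 0 = w_0^2 < w_1^2 < ... < w_k^2 < 1 for all k, and lim_{k→∞} w_k^2 = 1. -/
/-!
With `s = w²` the recursion reads `s ↦ s + S(s)⁻¹`, where `S(s)` is the sum. For `s < 1` the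
`l = 1` term alone gives `S(s) ≥ (m - 1)/(1 - s)`, so the increment is positive and, as `m ≥ 3`,
smaller than `1 - s`: the orbit increases and stays below 1. Its limit `L ≤ 1` cannot be below 1,
since `S` is continuous there and `L` would be a fixed point, i.e. `S(L)⁻¹ = 0`.
-/

open Finset Filter Topology

noncomputable def wilkinsonSum (m : ℕ) (x : ℝ) : ℝ :=
  ∑ l ∈ Ico 1 m, ((m : ℝ) - l) / ((l : ℝ) ^ 2 - x)

section
variable {m : ℕ} {x : ℝ} {s : ℕ → ℝ}

lemma sq_sub_pos_of_mem_Ico {l : ℕ} (hl : l ∈ Ico 1 m) (hx : x < 1) : 0 < (l : ℝ) ^ 2 - x := by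
  have : (1 : ℝ) ≤ l := by exact_mod_cast (mem_Ico.mp hl).1
  nlinarith

lemma one_sub_div_le_wilkinsonSum (hm : 2 ≤ m) (hx : x < 1) :
    ((m : ℝ) - 1) / (1 - x) ≤ wilkinsonSum m x := by
  have hterm : ∀ l ∈ Ico 1 m, 0 ≤ ((m : ℝ) - l) / ((l : ℝ) ^ 2 - x) := fun l hl => by
    have : (l : ℝ) ≤ m := by exact_mod_cast (mem_Ico.mp hl).2.le
    exact div_nonneg (by linarith) (sq_sub_pos_of_mem_Ico hl hx).le
  simpa [wilkinsonSum] using single_le_sum hterm (mem_Ico.mpr ⟨le_rfl, by omega⟩ : 1 ∈ Ico 1 m)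

lemma wilkinsonSum_pos (hm : 2 ≤ m) (hx : x < 1) : 0 < wilkinsonSum m x := by
  have : (2 : ℝ) ≤ m := by exact_mod_cast hm
  exact (div_pos (by linarith) (by linarith)).trans_le (one_sub_div_le_wilkinsonSum hm hx)

lemma inv_wilkinsonSum_lt_one_sub (hm : 3 ≤ m) (hx : x < 1) : (wilkinsonSum m x)⁻¹ < 1 - x := by
  have hm' : (3 : ℝ) ≤ m := by exact_mod_cast hm
  have hx' : 0 < 1 - x := by linarith
  calc (wilkinsonSum m x)⁻¹ ≤ (((m : ℝ) - 1) / (1 - x))⁻¹ :=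
        inv_anti₀ (div_pos (by linarith) hx') (one_sub_div_le_wilkinsonSum (by omega) hx)
    _ = (1 - x) / ((m : ℝ) - 1) := inv_div _ _
    _ < 1 - x := div_lt_self hx' (by linarith)

lemma continuousAt_wilkinsonSum (hx : x < 1) : ContinuousAt (wilkinsonSum m) x := by
  refine tendsto_finsetSum _ fun l hl => ?_
  exact continuousAt_const.div (continuousAt_const.sub continuousAt_id)
    (sq_sub_pos_of_mem_Ico hl hx).ne'

lemma wilkinson_orbit_lt_one (hm : 3 ≤ m) (h0 : s 0 < 1)
    (hs : ∀ k, s (k + 1) = s k + (wilkinsonSum m (s k))⁻¹) (k : ℕ) : s k < 1 := by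
  induction k with
  | zero => exact h0
  | succ k ih => linarith [hs k, inv_wilkinsonSum_lt_one_sub hm ih]

lemma wilkinson_orbit_strictMono (hm : 3 ≤ m) (h0 : s 0 < 1)
    (hs : ∀ k, s (k + 1) = s k + (wilkinsonSum m (s k))⁻¹) : StrictMono s :=
  strictMono_nat_of_lt_succ fun k => by
    have := inv_pos.mpr (wilkinsonSum_pos (m := m) (by omega) (wilkinson_orbit_lt_one hm h0 hs k))
    linarith [hs k]

lemma wilkinson_orbit_tendsto_one (hm : 3 ≤ m) (h0 : s 0 < 1)
    (hs : ∀ k, s (k + 1) = s k + (wilkinsonSum m (s k))⁻¹) : Tendsto s atTop (𝓝 1) := by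
  have hlt := wilkinson_orbit_lt_one hm h0 hs
  have hbdd : BddAbove (Set.range s) := ⟨1, Set.forall_mem_range.mpr fun k => (hlt k).le⟩
  have hlim : Tendsto s atTop (𝓝 (⨆ k, s k)) :=
    tendsto_atTop_ciSup (wilkinson_orbit_strictMono hm h0 hs).monotone hbdd
  set L := ⨆ k, s k
  obtain hL | hL := (ciSup_le fun k => (hlt k).le : L ≤ 1).lt_or_eq
  · have hpos : 0 < wilkinsonSum m L := wilkinsonSum_pos (by omega) hL
    have hstep : Tendsto (fun k => s k + (wilkinsonSum m (s k))⁻¹) atTop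
        (𝓝 (L + (wilkinsonSum m L)⁻¹)) :=
      hlim.add (((continuousAt_wilkinsonSum hL).tendsto.comp hlim).inv₀ hpos.ne')
    have hfix : L + (wilkinsonSum m L)⁻¹ = L := by
      refine tendsto_nhds_unique hstep ?_
      simpa only [hs] using (tendsto_add_atTop_iff_nat 1).mpr hlim
    linarith [inv_pos.mpr hpos]
  · rwa [← hL]

end

theorem stmt_15 (m : ℕ) (hm : 3 ≤ m) (w : ℕ → ℝ) (hw0 : w 0 = 0)
    (hrec : ∀ k, (w (k + 1)) ^ 2 = (w k) ^ 2 +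
      (∑ l ∈ Finset.Ico 1 m, ((m : ℝ) - l) / ((l : ℝ) ^ 2 - (w k) ^ 2))⁻¹) :
    StrictMono (fun k => (w k) ^ 2) ∧ (∀ k, (w k) ^ 2 < 1) ∧
      Tendsto (fun k => (w k) ^ 2) atTop (nhds 1) := by
  have h0 : w 0 ^ 2 < 1 := by simp [hw0]
  exact ⟨wilkinson_orbit_strictMono hm h0 hrec, wilkinson_orbit_lt_one hm h0 hrec,
    wilkinson_orbit_tendsto_one hm h0 hrec⟩
end

section
/- Let v_k = 1 - w_k^2(m) where w_k satisfies w_0 = 0, w_{k+1}^2 = w_k^2 + (Σ_{l=1}^{m-1}(m-l)/(l^2 - w_k^2))^{-1}, m ≥ 3. Then ((m-2)/(m-1))^k < v_k ≤ (1 - A(m))^k for all k ≥ 1, where A(m) = (m-1)/((m-1)^2 + m(m-2)B(m)) and B(m) = Σ_{l=2}^{m-1} (m-l)/((m-1)(l^2-1)). -/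
open Finset

set_option maxHeartbeats 1000000 in
theorem stmt_17 (m : ℕ) (hm : 3 ≤ m) (w : ℕ → ℝ) (hw0 : w 0 = 0)
    (hrec : ∀ k, (w (k + 1)) ^ 2 = (w k) ^ 2 +
      (∑ l ∈ Finset.Ico 1 m, ((m : ℝ) - l) / ((l : ℝ) ^ 2 - (w k) ^ 2))⁻¹)
    (B A : ℝ)
    (hB : B = ∑ l ∈ Finset.Ico 2 m, ((m : ℝ) - l) / (((m : ℝ) - 1) * ((l : ℝ) ^ 2 - 1)))
    (hA : A = ((m : ℝ) - 1) / (((m : ℝ) - 1) ^ 2 + m * ((m : ℝ) - 2) * B)) :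
    ∀ k, 1 ≤ k →
      (((m : ℝ) - 2) / ((m : ℝ) - 1)) ^ k < 1 - (w k) ^ 2 ∧
        1 - (w k) ^ 2 ≤ (1 - A) ^ k := by
  have hm3 : (3 : ℝ) ≤ (m : ℝ) := by exact_mod_cast hm
  have hBnn : 0 ≤ B := by
    rw [hB]
    apply Finset.sum_nonneg
    intro l hl
    rw [Finset.mem_Ico] at hl
    have hl2 : (2 : ℝ) ≤ (l : ℝ) := by exact_mod_cast hl.1
    have hlm : (l : ℝ) < (m : ℝ) := by exact_mod_cast hl.2
    have h4 : (4 : ℝ) ≤ (l : ℝ) ^ 2 := by nlinarith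
    apply div_nonneg (by linarith) (by nlinarith)
  have hmmB : 0 ≤ (m : ℝ) * ((m : ℝ) - 2) * B :=
    mul_nonneg (mul_nonneg (by linarith) (by linarith)) hBnn
  have hDpos : 0 < ((m : ℝ) - 1) ^ 2 + m * ((m : ℝ) - 2) * B := by nlinarith
  have hApos : 0 < A := by rw [hA]; exact div_pos (by linarith) hDpos
  have hA1 : A < 1 := by
    rw [hA, div_lt_one hDpos]; nlinarith
  -- main induction
  have key : ∀ k, (((m : ℝ) - 2) / ((m : ℝ) - 1)) ^ k ≤ 1 - (w k) ^ 2 ∧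
      1 - (w k) ^ 2 ≤ (1 - A) ^ k ∧
      (1 ≤ k → (((m : ℝ) - 2) / ((m : ℝ) - 1)) ^ k < 1 - (w k) ^ 2) := by
    intro k
    induction k with
    | zero => simp [hw0]
    | succ k ih =>
      obtain ⟨h1, h2, _⟩ := ih
      set v : ℝ := 1 - (w k) ^ 2 with hv
      have hx : (w k) ^ 2 = 1 - v := by rw [hv]; ring
      set S : ℝ := ∑ l ∈ Finset.Ico 1 m, ((m : ℝ) - l) / ((l : ℝ) ^ 2 - (w k) ^ 2) with hSdef
      clear_value v S
      have hratpos : 0 < ((m : ℝ) - 2) / ((m : ℝ) - 1) := by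
        apply div_pos <;> linarith
      have hv0 : 0 < v := lt_of_lt_of_le (pow_pos hratpos k) h1
      have hv1 : v ≤ 1 := by nlinarith [sq_nonneg (w k)]
      have hvne : v ≠ 0 := ne_of_gt hv0
      have hm1ne : (m : ℝ) - 1 ≠ 0 := by intro h; nlinarith
      have hterm : ∀ l ∈ Finset.Ico 2 m,
          0 < ((m : ℝ) - l) / ((l : ℝ) ^ 2 - (w k) ^ 2) := by
        intro l hl
        rw [Finset.mem_Ico] at hl
        have hl2 : (2 : ℝ) ≤ (l : ℝ) := by exact_mod_cast hl.1
        have hlm : (l : ℝ) < (m : ℝ) := by exact_mod_cast hl.2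
        apply div_pos (by linarith)
        rw [hx]; nlinarith
      have hsplit : S = ((m : ℝ) - 1) / v +
          ∑ l ∈ Finset.Ico 2 m, ((m : ℝ) - l) / ((l : ℝ) ^ 2 - (w k) ^ 2) := by
        rw [hSdef, Finset.sum_eq_sum_Ico_succ_bot (by omega : 1 < m)]
        push_cast
        rw [hx]
        norm_num
      have h2m : (2 : ℕ) ∈ Finset.Ico 2 m := by
        rw [Finset.mem_Ico]; omega
      have hS_lb : ((m : ℝ) - 1) / v < S := by
        rw [hsplit]
        have : 0 < ∑ l ∈ Finset.Ico 2 m, ((m : ℝ) - l) / ((l : ℝ) ^ 2 - (w k) ^ 2) :=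
          Finset.sum_pos' (fun l hl => le_of_lt (hterm l hl)) ⟨2, h2m, hterm 2 h2m⟩
        linarith
      have hSpos : 0 < S := lt_trans (div_pos (by linarith) hv0) hS_lb
      -- upper bound on S
      have hS_ub : S ≤ (((m : ℝ) - 1) ^ 2 + m * ((m : ℝ) - 2) * B) / (((m : ℝ) - 1) * v) := by
        rw [hsplit]
        have hT : ∑ l ∈ Finset.Ico 2 m, ((m : ℝ) - l) / ((l : ℝ) ^ 2 - (w k) ^ 2) ≤
            ∑ l ∈ Finset.Ico 2 m, ((m : ℝ) * ((m : ℝ) - 2) / (((m : ℝ) - 1) * v)) *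
              (((m : ℝ) - l) / (((m : ℝ) - 1) * ((l : ℝ) ^ 2 - 1))) := by
          apply Finset.sum_le_sum
          intro l hl
          rw [Finset.mem_Ico] at hl
          have hl2 : (2 : ℝ) ≤ (l : ℝ) := by exact_mod_cast hl.1
          have hlm : (l : ℝ) < (m : ℝ) := by exact_mod_cast hl.2
          have hlm1 : (l : ℝ) ≤ (m : ℝ) - 1 := by
            have : (l : ℝ) + 1 ≤ (m : ℝ) := by exact_mod_cast hl.2
            linarith
          rw [hx, div_mul_div_comm]
          have hd1 : (0 : ℝ) < (l : ℝ) ^ 2 - (1 - v) := by nlinarith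
          have hd2 : (0 : ℝ) < ((m : ℝ) - 1) * v * (((m : ℝ) - 1) * ((l : ℝ) ^ 2 - 1)) := by
            apply mul_pos (mul_pos (by linarith) hv0)
            apply mul_pos (by linarith) (by nlinarith)
          rw [div_le_div_iff₀ hd1 hd2]
          nlinarith [mul_nonneg (mul_nonneg (mul_nonneg
              (by linarith : (0:ℝ) ≤ (m:ℝ) - l)
              (by nlinarith : (0:ℝ) ≤ (m:ℝ) * ((m:ℝ) - 2)))
              (by nlinarith : (0:ℝ) ≤ (l:ℝ)^2 - 1)) (by linarith : (0:ℝ) ≤ 1 - v),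
            mul_nonneg (mul_nonneg
              (by linarith : (0:ℝ) ≤ (m:ℝ) - l) hv0.le)
              (by nlinarith : (0:ℝ) ≤ (m:ℝ) * ((m:ℝ) - 2) - ((l:ℝ)^2 - 1))]
        rw [← Finset.mul_sum, ← hB] at hT
        have heq : (((m : ℝ) - 1) ^ 2 + m * ((m : ℝ) - 2) * B) / (((m : ℝ) - 1) * v) =
            ((m : ℝ) - 1) / v + ((m : ℝ) * ((m : ℝ) - 2) / (((m : ℝ) - 1) * v)) * B := by
          field_simp
        rw [heq]
        linarith
      -- compute v_{k+1}
      have hvk1 : 1 - (w (k + 1)) ^ 2 = v - S⁻¹ := by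
        rw [hrec k, ← hSdef, hx]; ring
      -- lower bound step
      have hlow : ((m : ℝ) - 2) / ((m : ℝ) - 1) * v < 1 - (w (k + 1)) ^ 2 := by
        rw [hvk1]
        have h5 : (m : ℝ) - 1 < S * v := (div_lt_iff₀ hv0).mp hS_lb
        have hinv : S⁻¹ < v / ((m : ℝ) - 1) := by
          rw [← one_div, div_lt_div_iff₀ hSpos (by linarith : (0:ℝ) < (m:ℝ) - 1)]
          nlinarith
        have heq2 : ((m : ℝ) - 2) / ((m : ℝ) - 1) * v = v - v / ((m : ℝ) - 1) := by
          field_simp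
          ring
        linarith
      -- upper bound step
      have hup : 1 - (w (k + 1)) ^ 2 ≤ (1 - A) * v := by
        rw [hvk1]
        have hDne : ((m : ℝ) - 1) ^ 2 + m * ((m : ℝ) - 2) * B ≠ 0 := ne_of_gt hDpos
        have h6 : A * v * S ≤ A * v * ((((m : ℝ) - 1) ^ 2 + m * ((m : ℝ) - 2) * B) /
            (((m : ℝ) - 1) * v)) :=
          mul_le_mul_of_nonneg_left hS_ub (mul_nonneg hApos.le hv0.le)
        have h7 : A * v * ((((m : ℝ) - 1) ^ 2 + m * ((m : ℝ) - 2) * B) /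
            (((m : ℝ) - 1) * v)) = 1 := by
          rw [hA]
          field_simp
        have hAv : A * v ≤ S⁻¹ := by
          rw [← one_div, le_div_iff₀ hSpos]
          linarith
        nlinarith
      refine ⟨?_, ?_, fun _ => ?_⟩
      · calc (((m : ℝ) - 2) / ((m : ℝ) - 1)) ^ (k + 1)
            = ((m : ℝ) - 2) / ((m : ℝ) - 1) * (((m : ℝ) - 2) / ((m : ℝ) - 1)) ^ k := by ring
          _ ≤ ((m : ℝ) - 2) / ((m : ℝ) - 1) * v := mul_le_mul_of_nonneg_left h1 hratpos.le
          _ ≤ 1 - (w (k + 1)) ^ 2 := hlow.le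
      · calc 1 - (w (k + 1)) ^ 2 ≤ (1 - A) * v := hup
          _ ≤ (1 - A) * (1 - A) ^ k := mul_le_mul_of_nonneg_left h2 (by linarith)
          _ = (1 - A) ^ (k + 1) := by ring
      · calc (((m : ℝ) - 2) / ((m : ℝ) - 1)) ^ (k + 1)
            = ((m : ℝ) - 2) / ((m : ℝ) - 1) * (((m : ℝ) - 2) / ((m : ℝ) - 1)) ^ k := by ring
          _ ≤ ((m : ℝ) - 2) / ((m : ℝ) - 1) * v := mul_le_mul_of_nonneg_left h1 hratpos.le
          _ < 1 - (w (k + 1)) ^ 2 := hlow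
  intro k hk
  obtain ⟨_, h2, h3⟩ := key k
  exact ⟨h3 hk, h2⟩
end

section
/- Let P be an n×n Hermitian matrix with distinct eigenvalues p_1, ..., p_m of multiplicities r_1, ..., r_m, let q be a positive integer, and set t_k^{(q)} = Σ_{i=1}^m (r_i - q) p_i^k = tr(P^k) - q·Σ_i p_i^k. Then the rank of the m×m Hankel matrix H_m^{(q)} = [t_{i+j-2}^{(q)}]_{i,j=1..m} equals m minus the number of eigenvalues whose multiplicity equals q. -/
open Finset Polynomial

theorem stmt_19 (n m : ℕ) (P : Matrix (Fin n) (Fin n) ℂ) (hP : P.IsHermitian)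
    (p : Fin m → ℝ) (hp : Function.Injective p)
    (r : Fin m → ℕ) (hr : ∀ i, 0 < r i)
    (hchar : P.charpoly = ∏ i, (X - C ((p i : ℂ))) ^ (r i))
    (q : ℕ) (hq : 0 < q)
    (tq : ℕ → ℝ) (htq : ∀ k, tq k = ∑ i, ((r i : ℝ) - q) * p i ^ k) :
    (Matrix.of fun i j : Fin m => tq ((i : ℕ) + (j : ℕ))).rank =
      m - (Finset.univ.filter fun i => r i = q).card := by
  classical
  set w : Fin m → ℝ := fun i => (r i : ℝ) - q with hw
  set V : Matrix (Fin m) (Fin m) ℝ := Matrix.vandermonde p with hV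
  have hdet : IsUnit V.det := by
    rw [hV, Matrix.det_vandermonde]
    refine isUnit_iff_ne_zero.mpr (Finset.prod_ne_zero_iff.mpr fun i _ => ?_)
    exact Finset.prod_ne_zero_iff.mpr fun j hj => by
      have hij : i < j := Finset.mem_Ioi.mp hj
      exact sub_ne_zero_of_ne fun h => hij.ne (hp h.symm)
  have hfact : (Matrix.of fun i j : Fin m => tq ((i : ℕ) + (j : ℕ)))
      = V.transpose * Matrix.diagonal w * V := by
    ext i j
    simp only [Matrix.mul_apply, Matrix.transpose_apply, Matrix.diagonal_apply,
      Matrix.of_apply, hV, Matrix.vandermonde_apply, htq]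
    refine Finset.sum_congr rfl fun k _ => ?_
    rw [Finset.sum_eq_single k (fun b _ hb => by simp [hb]) (by simp)]
    simp [pow_add]; ring
  rw [hfact, Matrix.rank_mul_eq_left_of_isUnit_det V _ hdet,
    Matrix.rank_mul_eq_right_of_isUnit_det V.transpose _ (by rwa [Matrix.det_transpose]),
    Matrix.rank_diagonal]
  have hiff : ∀ i, w i ≠ 0 ↔ ¬ r i = q := by
    intro i
    rw [hw]
    constructor
    · intro h hrq; apply h; simp [hrq]
    · intro h hzero
      exact h (by exact_mod_cast sub_eq_zero.mp hzero)
  rw [Fintype.card_subtype]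
  rw [show (Finset.univ.filter fun i => w i ≠ 0) = (Finset.univ.filter fun i => ¬ r i = q) from
    Finset.filter_congr fun i _ => by simp [hiff i]]
  have := Finset.card_filter_add_card_filter_not (s := (Finset.univ : Finset (Fin m)))
    (p := fun i => r i = q)
  simp only [Finset.card_univ, Fintype.card_fin] at this
  omega
end
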